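/- Let τ ∈ ℍ and set a_k := θ_k^{(4)}(0, τ) for k = 0, 1, 2. Then a_0·a_2·(a_0² + a_2²) = 2·a_1⁴. (This quartic equation defines the modular curve X^{(4)}(8) in ℙ² with coordinates (a_0 : a_1 : a_2).) -/
import Mathlib


open scoped UpperHalfPlane

/-- `e(x) = exp(2πix)`. -/
noncomputable def e (x : ℂ) : ℂ := Complex.exp (2 * Real.pi * Complex.I * x)

/-- The theta function with characteristic `(p, q)`:
`θ_{(p,q)}(z,τ) = ∑_{n ∈ ℤ} e((1/2)(n+p)²τ + (n+p)(z+q))`. -/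
noncomputable def jtheta (p q : ℝ) (z τ : ℂ) : ℂ :=
  ∑' n : ℤ, e ((1 / 2 : ℂ) * ((n : ℂ) + p) ^ 2 * τ + ((n : ℂ) + p) * (z + q))

/-- `θ_k^{(N)}(z,τ) = θ_{(1/2 - k/N, N/2)}(Nz, Nτ)`. -/
noncomputable def thetaN (N : ℕ) (k : ℝ) (z τ : ℂ) : ℂ :=
  jtheta (1 / 2 - k / N) (N / 2) (N * z) (N * τ)

/-- `θ_i^{(N)}(z,τ)` with integer index `i` (read modulo `N`). -/
noncomputable def thN (N : ℕ) (τ : ℍ) (i : ℤ) (z : ℂ) : ℂ := thetaN N (i : ℝ) z τ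

/-- The theta null values `a_i = θ_i^{(N)}(0,τ)` with integer index `i` (read modulo `N`). -/
noncomputable def aN (N : ℕ) (τ : ℍ) (i : ℤ) : ℂ := thetaN N (i : ℝ) 0 τ

set_option maxHeartbeats 1000000

section Aux
open Complex

lemma e_add (x y : ℂ) : e (x + y) = e x * e y := by simp [e, mul_add, Complex.exp_add]
lemma e_int (n : ℤ) : e n = 1 := by
  rw [e, show 2 * (Real.pi:ℂ) * Complex.I * n = n * (2 * Real.pi * Complex.I) by ring]
  exact Complex.exp_int_mul_two_pi_mul_I n
lemma e_half : e (1/2) = -1 := by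
  rw [e, show 2 * (Real.pi:ℂ) * Complex.I * (1/2) = Real.pi * Complex.I by ring]
  exact Complex.exp_pi_mul_I
noncomputable def F (c : ℂ) (s : ℂ) : ℂ := ∑' n : ℤ, e (((n:ℂ) + c) ^ 2 * s)
lemma F_term_eq (c s : ℂ) (n : ℤ) :
    e (((n:ℂ) + c) ^ 2 * s) = e (c ^ 2 * s) * jacobiTheta₂_term n (2 * c * s) (2 * s) := by
  rw [jacobiTheta₂_term, e, e, ← Complex.exp_add]; congr 1; ring
lemma summable_F (c : ℂ) {s : ℂ} (hs : 0 < s.im) :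
    Summable fun n : ℤ => e (((n:ℂ) + c) ^ 2 * s) := by
  have him : 0 < (2 * s).im := by simp [Complex.mul_im]; linarith
  have h : Summable fun n : ℤ => jacobiTheta₂_term n (2 * c * s) (2 * s) :=
    (summable_jacobiTheta₂_term_iff (2 * c * s) (2 * s)).mpr him
  exact (h.mul_left (e (c ^ 2 * s))).congr fun n => (F_term_eq c s n).symm
lemma hasSum_F (c : ℂ) {s : ℂ} (hs : 0 < s.im) :
    HasSum (fun n : ℤ => e (((n:ℂ) + c) ^ 2 * s)) (F c s) := (summable_F c hs).hasSum
lemma summable_norm_F (c : ℂ) {s : ℂ} (hs : 0 < s.im) :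
    Summable fun n : ℤ => ‖e (((n:ℂ) + c) ^ 2 * s)‖ := (summable_F c hs).norm

lemma hasSum_F_mul (c d : ℂ) {s : ℂ} (hs : 0 < s.im) :
    HasSum (fun p : ℤ × ℤ => e (((p.1:ℂ) + c) ^ 2 * s) * e (((p.2:ℂ) + d) ^ 2 * s))
      (F c s * F d s) := by
  have h := (summable_mul_of_summable_norm (summable_norm_F c hs) (summable_norm_F d hs)).hasSum
  rwa [← tsum_mul_tsum_of_summable_norm (summable_norm_F c hs) (summable_norm_F d hs)] at h

lemma hasSum_sum_elim {ι κ : Type*} {f : ι → ℂ} {g : κ → ℂ} {a b : ℂ}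
    (hf : HasSum f a) (hg : HasSum g b) : HasSum (Sum.elim f g) (a + b) := by
  have h1 : HasSum ((Sum.elim f g) ∘ ((↑) : Set.range (Sum.inl : ι → ι ⊕ κ) → ι ⊕ κ)) a :=
    ((Equiv.ofInjective Sum.inl Sum.inl_injective).hasSum_iff).mp hf
  have h2 : HasSum ((Sum.elim f g) ∘ ((↑) : Set.range (Sum.inr : κ → ι ⊕ κ) → ι ⊕ κ)) b :=
    ((Equiv.ofInjective Sum.inr Sum.inr_injective).hasSum_iff).mp hg
  exact (h1.add_isCompl Set.isCompl_range_inl_range_inr h2)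

/-- parity-split equiv of the square lattice -/
def Φ : (ℤ × ℤ) ⊕ (ℤ × ℤ) ≃ ℤ × ℤ where
  toFun := Sum.elim (fun p => (p.1 + p.2, p.1 - p.2)) (fun p => (p.1 + p.2 + 1, p.1 - p.2))
  invFun q := if (q.1 + q.2) % 2 = 0 then Sum.inl ((q.1 + q.2) / 2, (q.1 - q.2) / 2)
    else Sum.inr ((q.1 + q.2 - 1) / 2, (q.1 - q.2 - 1) / 2)
  left_inv p := by
    rcases p with ⟨a, b⟩ | ⟨a, b⟩ <;> dsimp only [Sum.elim_inl, Sum.elim_inr] <;>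
      [rw [if_pos (by omega)]; rw [if_neg (by omega)]] <;>
      simp only [Sum.inl.injEq, Sum.inr.injEq, Prod.mk.injEq] <;> omega
  right_inv q := by
    rcases q with ⟨m, n⟩
    dsimp only
    by_cases h : (m + n) % 2 = 0
    · rw [if_pos h]; dsimp only [Sum.elim_inl]; ext <;> dsimp only <;> omega
    · rw [if_neg h]; dsimp only [Sum.elim_inr]; ext <;> dsimp only <;> omega

lemma F_mul (c d : ℂ) {s : ℂ} (hs : 0 < s.im) :
    F c s * F d s =
      F ((c + d) / 2) (2 * s) * F ((c - d) / 2) (2 * s) +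
      F ((c + d + 1) / 2) (2 * s) * F ((c - d + 1) / 2) (2 * s) := by
  have hs2 : 0 < (2 * s).im := by simp [Complex.mul_im]; linarith
  have hL := hasSum_F_mul c d hs
  have hA := hasSum_F_mul ((c + d) / 2) ((c - d) / 2) hs2
  have hB := hasSum_F_mul ((c + d + 1) / 2) ((c - d + 1) / 2) hs2
  have hAB := hasSum_sum_elim hA hB
  have hfun : (fun p : ℤ × ℤ => e (((p.1:ℂ) + c) ^ 2 * s) * e (((p.2:ℂ) + d) ^ 2 * s)) ∘ Φ =
      Sum.elim
        (fun p : ℤ × ℤ => e (((p.1:ℂ) + (c + d) / 2) ^ 2 * (2 * s)) *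
          e (((p.2:ℂ) + (c - d) / 2) ^ 2 * (2 * s)))
        (fun p : ℤ × ℤ => e (((p.1:ℂ) + (c + d + 1) / 2) ^ 2 * (2 * s)) *
          e (((p.2:ℂ) + (c - d + 1) / 2) ^ 2 * (2 * s))) := by
    funext x
    rcases x with ⟨a, b⟩ | ⟨a, b⟩ <;>
      simp only [Function.comp_apply, Sum.elim_inl, Sum.elim_inr, Φ, Equiv.coe_fn_mk] <;>
      rw [← e_add, ← e_add] <;> congr 1 <;> push_cast <;> ring
  have hcomp : HasSum ((fun p : ℤ × ℤ =>
      e (((p.1:ℂ) + c) ^ 2 * s) * e (((p.2:ℂ) + d) ^ 2 * s)) ∘ Φ)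
      (F ((c + d) / 2) (2 * s) * F ((c - d) / 2) (2 * s) +
       F ((c + d + 1) / 2) (2 * s) * F ((c - d + 1) / 2) (2 * s)) := by
    rw [hfun]; exact hAB
  exact hL.unique (Φ.hasSum_iff.mp hcomp)

lemma F_add_one (c s : ℂ) : F (c + 1) s = F c s := by
  rw [F, F, ← (Equiv.addRight (1 : ℤ)).tsum_eq (fun n : ℤ => e (((n:ℂ) + c) ^ 2 * s))]
  refine tsum_congr fun n => ?_
  congr 1
  push_cast [Equiv.coe_addRight]
  ring

lemma F_neg (c s : ℂ) : F (-c) s = F c s := by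
  rw [F, F, ← (Equiv.neg ℤ).tsum_eq (fun n : ℤ => e (((n:ℂ) + c) ^ 2 * s))]
  refine tsum_congr fun n => ?_
  congr 1
  push_cast [Equiv.neg_apply]
  ring

/-- even/odd split equiv of ℤ -/
def Ψ : ℤ ⊕ ℤ ≃ ℤ where
  toFun := Sum.elim (fun k => 2 * k) (fun k => 2 * k + 1)
  invFun n := if n % 2 = 0 then Sum.inl (n / 2) else Sum.inr ((n - 1) / 2)
  left_inv p := by
    rcases p with k | k <;> dsimp only [Sum.elim_inl, Sum.elim_inr] <;>
      [rw [if_pos (by omega)]; rw [if_neg (by omega)]] <;>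
      simp only [Sum.inl.injEq, Sum.inr.injEq] <;> omega
  right_inv n := by
    dsimp only
    by_cases h : n % 2 = 0
    · rw [if_pos h]; dsimp only [Sum.elim_inl]; omega
    · rw [if_neg h]; dsimp only [Sum.elim_inr]; omega

lemma F_half_split {s : ℂ} (hs : 0 < s.im) :
    F (1/2) s = F (1/4) (4 * s) + F (3/4) (4 * s) := by
  have hs4 : 0 < (4 * s).im := by simp [Complex.mul_im]; linarith
  have hA := hasSum_F (1/4 : ℂ) hs4
  have hB := hasSum_F (3/4 : ℂ) hs4
  have hAB := hasSum_sum_elim hA hB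
  have hfun : (fun n : ℤ => e (((n:ℂ) + 1/2) ^ 2 * s)) ∘ Ψ =
      Sum.elim (fun k : ℤ => e (((k:ℂ) + 1/4) ^ 2 * (4 * s)))
        (fun k : ℤ => e (((k:ℂ) + 3/4) ^ 2 * (4 * s))) := by
    funext x
    rcases x with k | k <;>
      simp only [Function.comp_apply, Sum.elim_inl, Sum.elim_inr, Ψ, Equiv.coe_fn_mk] <;>
      congr 1 <;> push_cast <;> ring
  have hcomp : HasSum ((fun n : ℤ => e (((n:ℂ) + 1/2) ^ 2 * s)) ∘ Ψ)
      (F (1/4) (4 * s) + F (3/4) (4 * s)) := by rw [hfun]; exact hAB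
  exact (hasSum_F (1/2 : ℂ) hs).unique (Ψ.hasSum_iff.mp hcomp)

lemma F_quarter {s : ℂ} (hs : 0 < s.im) : F (1/2) s = 2 * F (1/4) (4 * s) := by
  have h34 : F (3/4 : ℂ) (4 * s) = F (1/4) (4 * s) := by
    have : (3/4 : ℂ) = -(1/4) + 1 := by norm_num
    rw [this, F_add_one, F_neg]
  rw [F_half_split hs, h34]; ring

lemma F_one_eq (t : ℂ) : F 1 t = F 0 t := by simpa using F_add_one 0 t

lemma key_identity {s : ℂ} (hs : 0 < s.im) :
    F (1/2) s * F 0 s * ((F (1/2) s) ^ 2 + (F 0 s) ^ 2) = 2 * (F (1/4) s) ^ 4 := by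
  have hu : 0 < (s/4).im := by
    rw [div_eq_mul_inv, Complex.mul_im]; norm_num; linarith
  have hv : 0 < (s/2).im := by
    rw [div_eq_mul_inv, Complex.mul_im]; norm_num; linarith
  -- hq : F (1/2) (s/4) = 2 * F (1/4) s
  have hq : F (1/2) (s/4) = 2 * F (1/4) s := by
    have := F_quarter hu
    rwa [show (4:ℂ) * (s/4) = s by ring] at this
  have h1 := F_mul (1/2) (1/2) hu
  rw [show (2:ℂ) * (s/4) = s/2 by ring] at h1
  norm_num at h1
  rw [F_one_eq] at h1
  -- h1 : F (1/2) (s/4) * F (1/2) (s/4) = F (1/2) (s/2) * F 0 (s/2) + F 0 (s/2) * F (1/2) (s/2)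
  have h2 := F_mul (1/2) (1/2) hv
  rw [show (2:ℂ) * (s/2) = s by ring] at h2
  norm_num at h2
  rw [F_one_eq] at h2
  have h3 := F_mul 0 0 hv
  rw [show (2:ℂ) * (s/2) = s by ring] at h3
  norm_num at h3
  set a := F (1/2) (s/4)
  set b := F (1/2) (s/2)
  set c0 := F 0 (s/2)
  set d := F (1/2) s
  set e0 := F 0 s
  set f := F (1/4) s
  calc d * e0 * (d ^ 2 + e0 ^ 2) = (b * b) * (c0 * c0) / 2 := by rw [h2, h3]; ring
    _ = (a * a) ^ 2 / 8 := by rw [h1]; ring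
    _ = 2 * f ^ 4 := by rw [show a = 2 * f from hq]; ring

lemma e_eq_of_sub_int {x y : ℂ} (m : ℤ) (h : x = y + m) : e x = e y := by
  subst h; rw [e_add, e_int, mul_one]

lemma e_eq_neg_of {x y : ℂ} (m : ℤ) (h : x = y + 1/2 + m) : e x = -(e y) := by
  subst h; rw [e_add, e_int, mul_one, e_add, e_half]; ring

lemma aN_zero (τ : ℍ) : aN 4 τ 0 = F (1/2) (2 * (τ:ℂ)) := by
  rw [aN, thetaN, jtheta, F]
  refine tsum_congr fun n => ?_
  refine e_eq_of_sub_int (2 * n + 1) ?_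
  push_cast
  ring

lemma aN_two (τ : ℍ) : aN 4 τ 2 = F 0 (2 * (τ:ℂ)) := by
  rw [aN, thetaN, jtheta, F]
  refine tsum_congr fun n => ?_
  refine e_eq_of_sub_int (2 * n) ?_
  push_cast
  ring

lemma aN_one (τ : ℍ) : aN 4 τ 1 = -(F (1/4) (2 * (τ:ℂ))) := by
  rw [aN, thetaN, jtheta, F, ← tsum_neg]
  refine tsum_congr fun n => ?_
  refine e_eq_neg_of (2 * n) ?_
  push_cast
  ring

end Aux

/-- The quartic equation of the modular curve `X^{(4)}(8)` satisfied by the theta null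
values of level 4. -/
theorem modular_curve_level_4 (τ : ℍ) :
    aN 4 τ 0 * aN 4 τ 2 * (aN 4 τ 0 ^ 2 + aN 4 τ 2 ^ 2) = 2 * aN 4 τ 1 ^ 4 := by
  have ht : 0 < (2 * (τ:ℂ)).im := by
    rw [Complex.mul_im]
    simpa using τ.im_pos
  rw [aN_zero, aN_two, aN_one]
  linear_combination key_identity ht
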